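/- arXiv:2212.13948 — 3 statements merged into one kernel-verified Lean document; each statement's English description precedes it below -/
import Mathlib

section
/- Define r(t) = (min{-t, -a} + m, min{t, b}, median{t, a, b}) for real constants a > b and m. Then the image of r restricted to (0, ∞), assuming 0 < b < a, is a broken line consisting of three pieces: {(-a + m, t, b) : 0 < t < b}, {(-a + m, b, t) : b ≤ t ≤ a}, and {(-t + m, b, a) : t > a}, with corner points A = (-a + m, b, b) and A' = (-a + m, b, a). -/
noncomputable def median (a b c : ℝ) : ℝ := max (min a b) (min (max a b) c)

noncomputable def rMap (a b m : ℝ) (t : ℝ) : ℝ × ℝ × ℝ :=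
  (min (-t) (-a) + m, min t b, median t a b)

lemma rMap_eval (a b m t : ℝ) (hb : 0 < b) (hba : b < a) (ht : 0 < t) :
    rMap a b m t =
      if t < b then (-a + m, t, b)
      else if t ≤ a then (-a + m, b, t)
      else (-t + m, b, a) := by
  unfold rMap median
  split_ifs with h1 h2
  · have hta : t < a := lt_trans h1 hba
    rw [min_eq_right (by linarith : -a ≤ -t), min_eq_left hta.le,
      max_eq_right hta.le, min_eq_right hba.le, max_eq_right h1.le, min_eq_left h1.le]
  · have hbt : b ≤ t := not_lt.1 h1
    rw [min_eq_right (by linarith : -a ≤ -t), min_eq_left h2,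
      max_eq_right h2, min_eq_right hba.le, max_eq_left hbt, min_eq_right hbt]
  · have hat : a < t := not_le.1 h2
    rw [min_eq_left (by linarith : -t ≤ -a), max_eq_left hat.le,
      min_eq_right (by linarith : b ≤ t), min_eq_right hat.le, max_eq_left hba.le]

theorem rMap_image (a b m : ℝ) (hb : 0 < b) (hba : b < a) :
    rMap a b m '' Set.Ioi (0 : ℝ) =
      {p : ℝ × ℝ × ℝ | ∃ t : ℝ, 0 < t ∧ t < b ∧ p = (-a + m, t, b)} ∪
      {p : ℝ × ℝ × ℝ | ∃ t : ℝ, b ≤ t ∧ t ≤ a ∧ p = (-a + m, b, t)} ∪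
      {p : ℝ × ℝ × ℝ | ∃ t : ℝ, a < t ∧ p = (-t + m, b, a)} ∧
    rMap a b m b = (-a + m, b, b) ∧ rMap a b m a = (-a + m, b, a) := by
  refine ⟨?_, ?_, ?_⟩
  · ext p
    constructor
    · rintro ⟨t, ht, rfl⟩
      rw [rMap_eval a b m t hb hba ht]
      split_ifs with h1 h2
      · exact Or.inl (Or.inl ⟨t, ht, h1, rfl⟩)
      · exact Or.inl (Or.inr ⟨t, not_lt.1 h1, h2, rfl⟩)
      · exact Or.inr ⟨t, not_le.1 h2, rfl⟩
    · rintro ((⟨t, ht, htb, rfl⟩ | ⟨t, hbt, hta, rfl⟩) | ⟨t, hat, rfl⟩)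
      · exact ⟨t, ht, by rw [rMap_eval a b m t hb hba ht, if_pos htb]⟩
      · refine ⟨t, lt_of_lt_of_le hb hbt, ?_⟩
        rw [rMap_eval a b m t hb hba (lt_of_lt_of_le hb hbt), if_neg (not_lt.2 hbt),
          if_pos hta]
      · have ht : 0 < t := by linarith
        exact ⟨t, ht, by rw [rMap_eval a b m t hb hba ht, if_neg (by linarith),
          if_neg (by linarith)]⟩
  · rw [rMap_eval a b m b hb hba hb, if_neg (lt_irrefl b), if_pos hba.le]
  · rw [rMap_eval a b m a hb hba (by linarith : (0:ℝ) < a), if_neg (by linarith), if_pos le_rfl]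
end

section
/- Let ψ: ℝ³ → ℝ be continuous with q3 ↦ ψ(q1,q2,q3) a strictly increasing bijection onto (0,∞) for each fixed (q1,q2), and let c1 > c2 > 0. Define j: ℝ³ → ℝ⁵ by j(q) = (θ₁(q), θ₂(q), ϑ(q), q1, q2), where θ₁(q) = min{-ψ(q), -ψ(q1,q2,log c1)} + min{0,q1} + min{0,q2}, θ₂(q) = min{ψ(q), ψ(q1,q2,log c2)}, and ϑ(q) = median{ψ(q), ψ(q1,q2,log c1), ψ(q1,q2,log c2)}. Then j is injective. -/
noncomputable def theta1 (ψ : ℝ → ℝ → ℝ → ℝ) (c1 : ℝ) (q : ℝ × ℝ × ℝ) : ℝ :=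
  min (-ψ q.1 q.2.1 q.2.2) (-ψ q.1 q.2.1 (Real.log c1)) + min 0 q.1 + min 0 q.2.1

noncomputable def theta2 (ψ : ℝ → ℝ → ℝ → ℝ) (c2 : ℝ) (q : ℝ × ℝ × ℝ) : ℝ :=
  min (ψ q.1 q.2.1 q.2.2) (ψ q.1 q.2.1 (Real.log c2))

noncomputable def vartheta (ψ : ℝ → ℝ → ℝ → ℝ) (c1 c2 : ℝ) (q : ℝ × ℝ × ℝ) : ℝ :=
  median (ψ q.1 q.2.1 q.2.2) (ψ q.1 q.2.1 (Real.log c1)) (ψ q.1 q.2.1 (Real.log c2))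

noncomputable def jMap (ψ : ℝ → ℝ → ℝ → ℝ) (c1 c2 : ℝ) (q : ℝ × ℝ × ℝ) :
    ℝ × ℝ × ℝ × ℝ × ℝ :=
  (theta1 ψ c1 q, theta2 ψ c2 q, vartheta ψ c1 c2 q, q.1, q.2.1)

lemma key_lt (L1 L2 a a' : ℝ) (h12 : L2 < L1)
    (h1 : max a L1 = max a' L1) (h2 : min a L2 = min a' L2)
    (h3 : median a L1 L2 = median a' L1 L2) (hlt : a < a') : False := by
  rcases le_or_gt a' L2 with hD | hD
  · rw [min_eq_left (hlt.le.trans hD), min_eq_left hD] at h2; linarith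
  rcases le_or_gt L1 a with hA | hA
  · rw [max_eq_left hA, max_eq_left (hA.trans hlt.le)] at h1; linarith
  have ha : median a L1 L2 = max a L2 := by
    unfold median
    rw [min_eq_left hA.le, max_eq_right hA.le, min_eq_right h12.le]
  rcases le_or_gt a' L1 with hB | hB
  · have : median a' L1 L2 = a' := by
      unfold median
      rw [min_eq_left hB, max_eq_right hB, min_eq_right h12.le,
        max_eq_left hD.le]
    rw [ha, this] at h3
    rcases max_cases a L2 with ⟨h, _⟩ | ⟨h, _⟩ <;> linarith
  · have : median a' L1 L2 = L1 := by
      unfold median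
      rw [min_eq_right hB.le, max_eq_left hB.le, min_eq_right hD.le,
        show max L1 L2 = L1 from max_eq_left h12.le]
    rw [ha, this] at h3
    rcases max_cases a L2 with ⟨h, _⟩ | ⟨h, _⟩ <;> linarith

lemma key (L1 L2 a a' : ℝ) (h12 : L2 < L1)
    (h1 : max a L1 = max a' L1) (h2 : min a L2 = min a' L2)
    (h3 : median a L1 L2 = median a' L1 L2) : a = a' := by
  rcases lt_trichotomy a a' with h | h | h
  · exact absurd (key_lt L1 L2 a a' h12 h1 h2 h3 h) id
  · exact h
  · exact absurd (key_lt L1 L2 a' a h12 h1.symm h2.symm h3.symm h) id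

theorem jMap_injective (ψ : ℝ → ℝ → ℝ → ℝ)
    (hcont : Continuous fun p : ℝ × ℝ × ℝ => ψ p.1 p.2.1 p.2.2)
    (hmono : ∀ q1 q2 : ℝ, StrictMono (ψ q1 q2))
    (hrange : ∀ q1 q2 : ℝ, Set.range (ψ q1 q2) = Set.Ioi (0 : ℝ))
    (c1 c2 : ℝ) (hc : c2 < c1) (hc2 : 0 < c2) :
    Function.Injective (jMap ψ c1 c2) := by
  intro p q hpq
  obtain ⟨p1, p2, p3⟩ := p
  obtain ⟨q1, q2, q3⟩ := q
  simp only [jMap, Prod.mk.injEq] at hpq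
  obtain ⟨hθ1, hθ2, hϑ, h1, h2⟩ := hpq
  subst h1; subst h2
  set a := ψ p1 p2 p3 with ha
  set a' := ψ p1 p2 q3 with ha'
  set L1 := ψ p1 p2 (Real.log c1) with hL1
  set L2 := ψ p1 p2 (Real.log c2) with hL2
  have h12 : L2 < L1 := hmono p1 p2 (Real.log_lt_log hc2 hc)
  have hmin : min (-a) (-L1) = min (-a') (-L1) := by
    simpa [theta1] using hθ1
  have hmax : max a L1 = max a' L1 := by
    have : -max a L1 = -max a' L1 := by
      rw [← min_neg_neg, ← min_neg_neg]; exact hmin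
    linarith
  have haa : a = a' :=
    key L1 L2 a a' h12 hmax (by simpa [theta2] using hθ2)
      (by simpa [vartheta] using hϑ)
  have : p3 = q3 := (hmono p1 p2).injective haa
  rw [this]
end

section
/- Define g₁(y₁,y₂,y₃) = (1/y₃, y₃(1+y₁)(1+y₂), y₃(1+y₁), y₁, y₂), g₂(y₁,y₂,y₃) = ((1+y₁)/y₃, y₃(1+y₂), y₃, y₁, y₂), g₃(y₁,y₂,y₃) = ((1+y₁)(1+y₂)/y₃, y₃, y₃/(1+y₂), y₁, y₂), as maps from suitable open subsets of (Λ*)³ to Λ² × Λ × (Λ*)². Then g₂ ∘ Φ₁₂ = g₁ and g₃ ∘ Φ₂₃ = g₂, where Φ₁₂(y) = (y₁,y₂,y₃(1+y₁)) and Φ₂₃(y) = (y₁,y₂,y₃(1+y₂)). -/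
def Phi12 {Λ : Type*} [Field Λ] (y : Λ × Λ × Λ) : Λ × Λ × Λ :=
  (y.1, y.2.1, y.2.2 * (1 + y.1))

def Phi23 {Λ : Type*} [Field Λ] (y : Λ × Λ × Λ) : Λ × Λ × Λ :=
  (y.1, y.2.1, y.2.2 * (1 + y.2.1))

def g1 {Λ : Type*} [Field Λ] (y : Λ × Λ × Λ) : Λ × Λ × Λ × Λ × Λ :=
  (1 / y.2.2, y.2.2 * (1 + y.1) * (1 + y.2.1), y.2.2 * (1 + y.1), y.1, y.2.1)

def g2 {Λ : Type*} [Field Λ] (y : Λ × Λ × Λ) : Λ × Λ × Λ × Λ × Λ :=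
  ((1 + y.1) / y.2.2, y.2.2 * (1 + y.2.1), y.2.2, y.1, y.2.1)

def g3 {Λ : Type*} [Field Λ] (y : Λ × Λ × Λ) : Λ × Λ × Λ × Λ × Λ :=
  ((1 + y.1) * (1 + y.2.1) / y.2.2, y.2.2, y.2.2 / (1 + y.2.1), y.1, y.2.1)

theorem g_compatibility {Λ : Type*} [Field Λ] :
    (∀ y : Λ × Λ × Λ, y.2.2 ≠ 0 → 1 + y.1 ≠ 0 → g2 (Phi12 y) = g1 y) ∧
    (∀ y : Λ × Λ × Λ, y.2.2 ≠ 0 → 1 + y.2.1 ≠ 0 → g3 (Phi23 y) = g2 y) := by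
  constructor <;> rintro ⟨a, b, c⟩ hc h <;>
    simp only [Phi12, Phi23, g1, g2, g3, Prod.mk.injEq] <;>
    constructorm* _ ∧ _ <;> (try trivial) <;> field_simp <;> ring
end
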